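/- For every α ∈ (1,2), every positive integer M, and all real numbers η ≥ 0 and d̄ ≥ 0, the matrix P = I_M − η·d̄·G_α is invertible. -/
import Mathlib


open Matrix

/-- The Grünwald–Letnikov coefficients `g_k^{(α)}`. -/
noncomputable def gcoef (α : ℝ) : ℕ → ℝ
  | 0 => 1
  | (k+1) => (1 - (α + 1) / (k + 1 : ℕ)) * gcoef α k

/-- The WSGD coefficients `w_k^{(α)}`. -/
noncomputable def wcoef (α : ℝ) : ℕ → ℝ
  | 0 => α / 2 * gcoef α 0
  | (k+1) => α / 2 * gcoef α (k+1) + (2 - α) / 2 * gcoef α k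

/-- The `M × M` lower-Hessenberg Toeplitz matrix `G_α`. -/
noncomputable def Gmat (α : ℝ) (M : ℕ) : Matrix (Fin M) (Fin M) ℝ :=
  Matrix.of fun i j => if (j : ℕ) ≤ (i : ℕ) + 1 then wcoef α ((i : ℕ) + 1 - (j : ℕ)) else 0

noncomputable def Hsum (α : ℝ) (N : ℕ) : ℝ := ∑ k ∈ Finset.range (N+1), gcoef α k
noncomputable def Ssum (α : ℝ) (N : ℕ) : ℝ := ∑ k ∈ Finset.range (N+1), wcoef α k

lemma gcoef_succ (α : ℝ) (k : ℕ) :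
    gcoef α (k+1) = (1 - (α + 1) / ((k:ℝ) + 1)) * gcoef α k := by
  simp [gcoef]

lemma gcoef_nonneg (α : ℝ) (hα1 : 1 < α) (hα2 : α < 2) :
    ∀ k, 2 ≤ k → 0 ≤ gcoef α k := by
  intro k hk
  induction k with
  | zero => omega
  | succ n ih =>
    rcases Nat.lt_or_ge n 2 with h | h
    · interval_cases n
      · omega
      · -- k = 2
        simp only [gcoef]
        push_cast
        nlinarith
    · have hn := ih (by omega)
      rw [gcoef_succ]
      have : 0 ≤ 1 - (α + 1) / ((n:ℝ) + 1) := by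
        rw [sub_nonneg, div_le_one (by positivity)]
        have : (2:ℝ) ≤ n := by exact_mod_cast h
        linarith
      positivity

lemma key_identity (α : ℝ) (hα1 : 1 < α) :
    ∀ N, gcoef α (N+1) = -(α/((N:ℝ)+1)) * Hsum α N := by
  have hα0 : α ≠ 0 := by linarith
  intro N
  induction N with
  | zero => simp [gcoef, Hsum]
  | succ n ih =>
    have hn2 : ((n:ℝ)+2) ≠ 0 := by positivity
    have hH : Hsum α (n+1) = Hsum α n + gcoef α (n+1) := by
      simp [Hsum, Finset.sum_range_succ]
    have hHn : Hsum α n = -(((n:ℝ)+1)/α) * gcoef α (n+1) := by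
      rw [ih]; field_simp
    have hg : gcoef α (n+1+1) = (1 - (α+1)/((n:ℝ)+2)) * gcoef α (n+1) := by
      rw [gcoef_succ]; push_cast; ring_nf
    rw [hg, hH, hHn]
    push_cast
    field_simp
    ring

lemma Hsum_succ (α : ℝ) (hα1 : 1 < α) (N : ℕ) :
    Hsum α (N+1) = (1 - α/((N:ℝ)+1)) * Hsum α N := by
  have : Hsum α (N+1) = Hsum α N + gcoef α (N+1) := by
    simp [Hsum, Finset.sum_range_succ]
  rw [this, key_identity α hα1]
  ring

lemma Hsum_nonpos (α : ℝ) (hα1 : 1 < α) (hα2 : α < 2) :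
    ∀ N, 1 ≤ N → Hsum α N ≤ 0 := by
  intro N hN
  induction N with
  | zero => omega
  | succ n ih =>
    rcases Nat.lt_or_ge n 1 with h | h
    · interval_cases n
      simp [Hsum, Finset.sum_range_succ, gcoef]
      nlinarith
    · have hn := ih h
      rw [Hsum_succ α hα1]
      have hf : 0 ≤ 1 - α/((n:ℝ)+1) := by
        rw [sub_nonneg, div_le_one (by positivity)]
        have : (1:ℝ) ≤ n := by exact_mod_cast h
        linarith
      exact mul_nonpos_of_nonneg_of_nonpos hf hn

lemma Ssum_eq (α : ℝ) (N : ℕ) :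
    Ssum α (N+1) = α/2 * Hsum α (N+1) + (2-α)/2 * Hsum α N := by
  induction N with
  | zero => simp [Ssum, Hsum, Finset.sum_range_succ, wcoef]; ring
  | succ n ih =>
    have h1 : Ssum α (n+2) = Ssum α (n+1) + wcoef α (n+2) := by
      simp [Ssum, Finset.sum_range_succ]
    have h2 : Hsum α (n+2) = Hsum α (n+1) + gcoef α (n+2) := by
      simp [Hsum, Finset.sum_range_succ]
    have h3 : Hsum α (n+1) = Hsum α n + gcoef α (n+1) := by
      simp [Hsum, Finset.sum_range_succ]
    have hw : wcoef α (n+2) = α / 2 * gcoef α (n+2) + (2 - α) / 2 * gcoef α (n+1) := rfl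
    rw [h1, ih, h2, hw]
    linear_combination (α/2 - 1) * h3

lemma Ssum_nonpos (α : ℝ) (hα1 : 1 < α) (hα2 : α < 2) (N : ℕ) (hN : 2 ≤ N) :
    Ssum α N ≤ 0 := by
  obtain ⟨m, rfl⟩ : ∃ m, N = m + 2 := ⟨N - 2, by omega⟩
  rw [show m + 2 = (m+1) + 1 from rfl, Ssum_eq]
  have h1 := Hsum_nonpos α hα1 hα2 (m+2) (by omega)
  have h2 := Hsum_nonpos α hα1 hα2 (m+1) (by omega)
  nlinarith

lemma wcoef_one_nonpos (α : ℝ) (hα1 : 1 < α) (hα2 : α < 2) : wcoef α 1 ≤ 0 := by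
  simp [wcoef, gcoef]
  nlinarith

lemma Ssum_one (α : ℝ) : Ssum α 1 = wcoef α 0 + wcoef α 1 := by
  simp [Ssum, Finset.sum_range_succ]

lemma w0_w2_nonneg (α : ℝ) (hα1 : 1 < α) (hα2 : α < 2) :
    0 ≤ wcoef α 0 + wcoef α 2 := by
  simp [wcoef, gcoef]
  nlinarith [mul_nonneg (mul_nonneg (sub_nonneg.2 hα1.le) (by linarith : (0:ℝ) ≤ α)) (by linarith : (0:ℝ) ≤ α + 2)]

lemma wcoef_nonneg (α : ℝ) (hα1 : 1 < α) (hα2 : α < 2) (k : ℕ) (hk : 3 ≤ k) :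
    0 ≤ wcoef α k := by
  obtain ⟨m, rfl⟩ : ∃ m, k = m + 1 := ⟨k - 1, by omega⟩
  show 0 ≤ α / 2 * gcoef α (m+1) + (2 - α) / 2 * gcoef α m
  have h1 := gcoef_nonneg α hα1 hα2 (m+1) (by omega)
  have h2 := gcoef_nonneg α hα1 hα2 m (by omega)
  nlinarith

lemma tail_eq (α : ℝ) (M : ℕ) :
    ∑ j ∈ Finset.range M, wcoef α (j+1) = Ssum α M - wcoef α 0 := by
  rw [Ssum, Finset.sum_range_succ' (fun k => wcoef α k) M]
  ring

lemma row_sum (α : ℝ) (M : ℕ) (i : Fin M) :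
    ∑ j, Gmat α M i j
      = if (i:ℕ)+2 ≤ M then Ssum α ((i:ℕ)+1) else Ssum α M - wcoef α 0 := by
  have h : ∑ j, Gmat α M i j
      = ∑ j ∈ Finset.range M, (if j ≤ (i:ℕ)+1 then wcoef α ((i:ℕ)+1-j) else 0) := by
    rw [← Fin.sum_univ_eq_sum_range (fun j => if j ≤ (i:ℕ)+1 then wcoef α ((i:ℕ)+1-j) else 0) M]
    rfl
  rw [h]
  by_cases hM2 : (i:ℕ)+2 ≤ M
  · rw [if_pos hM2, ← Finset.sum_range_add_sum_Ico _ hM2]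
    have h2 : ∑ j ∈ Finset.Ico ((i:ℕ)+2) M,
        (if j ≤ (i:ℕ)+1 then wcoef α ((i:ℕ)+1-j) else 0) = 0 := by
      refine Finset.sum_eq_zero fun j hj => ?_
      rw [Finset.mem_Ico] at hj
      rw [if_neg (by omega)]
    rw [h2, add_zero]
    have h3 : ∑ j ∈ Finset.range ((i:ℕ)+2),
        (if j ≤ (i:ℕ)+1 then wcoef α ((i:ℕ)+1-j) else 0)
        = ∑ j ∈ Finset.range ((i:ℕ)+2), wcoef α ((i:ℕ)+2-1-j) := by
      refine Finset.sum_congr rfl fun j hj => ?_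
      rw [Finset.mem_range] at hj
      rw [if_pos (by omega), show (i:ℕ)+1-j = (i:ℕ)+2-1-j by omega]
    rw [h3, Finset.sum_range_reflect (fun k => wcoef α k) ((i:ℕ)+2)]
    rfl
  · rw [if_neg hM2]
    have hiM : (i:ℕ)+1 = M := by have := i.isLt; omega
    have h3 : ∑ j ∈ Finset.range M, (if j ≤ (i:ℕ)+1 then wcoef α ((i:ℕ)+1-j) else 0)
        = ∑ j ∈ Finset.range M, wcoef α ((M-1-j)+1) := by
      refine Finset.sum_congr rfl fun j hj => ?_
      rw [Finset.mem_range] at hj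
      rw [if_pos (by omega)]
      congr 1
      omega
    rw [h3, Finset.sum_range_reflect (fun k => wcoef α (k+1)) M, tail_eq]

lemma col_sum (α : ℝ) (M : ℕ) (i : Fin M) :
    ∑ j, Gmat α M j i
      = if 1 ≤ (i:ℕ) then Ssum α (M - (i:ℕ)) else Ssum α M - wcoef α 0 := by
  have h : ∑ j, Gmat α M j i
      = ∑ j ∈ Finset.range M, (if (i:ℕ) ≤ j+1 then wcoef α (j+1-(i:ℕ)) else 0) := by
    rw [← Fin.sum_univ_eq_sum_range (fun j => if (i:ℕ) ≤ j+1 then wcoef α (j+1-(i:ℕ)) else 0) M]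
    rfl
  rw [h]
  by_cases hi : 1 ≤ (i:ℕ)
  · rw [if_pos hi]
    have hiM : (i:ℕ) - 1 ≤ M := by have := i.isLt; omega
    rw [← Finset.sum_range_add_sum_Ico _ hiM]
    have h1 : ∑ j ∈ Finset.range ((i:ℕ)-1),
        (if (i:ℕ) ≤ j+1 then wcoef α (j+1-(i:ℕ)) else 0) = 0 := by
      refine Finset.sum_eq_zero fun j hj => ?_
      rw [Finset.mem_range] at hj
      rw [if_neg (by omega)]
    rw [h1, zero_add, Finset.sum_Ico_eq_sum_range]
    have h2 : ∀ t ∈ Finset.range (M - ((i:ℕ)-1)),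
        (if (i:ℕ) ≤ ((i:ℕ)-1+t)+1 then wcoef α (((i:ℕ)-1+t)+1-(i:ℕ)) else 0) = wcoef α t := by
      intro t _
      rw [if_pos (by omega)]
      congr 1
      omega
    rw [Finset.sum_congr rfl h2]
    have h3 : M - ((i:ℕ)-1) = (M - (i:ℕ)) + 1 := by have := i.isLt; omega
    rw [h3]
    rfl
  · rw [if_neg hi]
    have hi0 : (i:ℕ) = 0 := by omega
    have h1 : ∑ j ∈ Finset.range M, (if (i:ℕ) ≤ j+1 then wcoef α (j+1-(i:ℕ)) else 0)
        = ∑ j ∈ Finset.range M, wcoef α (j+1) := by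
      refine Finset.sum_congr rfl fun j hj => ?_
      rw [if_pos (by omega)]
      congr 1
      omega
    rw [h1, tail_eq]

lemma rowcol_nonpos (α : ℝ) (hα1 : 1 < α) (hα2 : α < 2) (M : ℕ) (i : Fin M) :
    (∑ j, Gmat α M i j) + (∑ j, Gmat α M j i) ≤ 0 := by
  have hiM := i.isLt
  rw [row_sum, col_sum]
  have hw1 := wcoef_one_nonpos α hα1 hα2
  split_ifs with h1 h2 h2
  · -- middle rows
    have e1 : 2 ≤ (i:ℕ)+1 := by omega
    have e2 : 2 ≤ M - (i:ℕ) := by omega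
    have := Ssum_nonpos α hα1 hα2 _ e1
    have := Ssum_nonpos α hα1 hα2 _ e2
    linarith
  · -- i = 0, M ≥ 2
    have hi0 : (i:ℕ) = 0 := by omega
    rw [hi0]
    have hS1 : Ssum α (0+1) = wcoef α 0 + wcoef α 1 := Ssum_one α
    have := Ssum_nonpos α hα1 hα2 M (by omega)
    rw [hS1]
    linarith
  · -- i = M-1, M ≥ 2
    have hMi : M - (i:ℕ) = 1 := by omega
    rw [hMi, Ssum_one]
    have := Ssum_nonpos α hα1 hα2 M (by omega)
    linarith
  · -- M = 1
    have hM1 : M = 1 := by omega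
    subst hM1
    rw [show Ssum α 1 = wcoef α 0 + wcoef α 1 from Ssum_one α]
    linarith

lemma sym_nonneg (α : ℝ) (hα1 : 1 < α) (hα2 : α < 2) {M : ℕ} (i j : Fin M)
    (hij : i ≠ j) : 0 ≤ Gmat α M i j + Gmat α M j i := by
  have key : ∀ a b : ℕ, b < a →
      0 ≤ (if b ≤ a+1 then wcoef α (a+1-b) else 0)
        + (if a ≤ b+1 then wcoef α (b+1-a) else 0) := by
    intro a b hba
    rw [if_pos (by omega)]
    by_cases h : a ≤ b+1
    · have ha : a = b+1 := by omega
      rw [if_pos h, show a+1-b = 2 by omega, show b+1-a = 0 by omega]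
      have := w0_w2_nonneg α hα1 hα2
      linarith
    · rw [if_neg h, add_zero]
      exact wcoef_nonneg α hα1 hα2 _ (by omega)
  have hij' : (i:ℕ) ≠ (j:ℕ) := fun h => hij (Fin.ext h)
  rcases Nat.lt_or_ge (j:ℕ) (i:ℕ) with h | h
  · exact key (i:ℕ) (j:ℕ) h
  · have h' : (i:ℕ) < (j:ℕ) := by omega
    have := key (j:ℕ) (i:ℕ) h'
    show 0 ≤ (if (j:ℕ) ≤ (i:ℕ)+1 then wcoef α ((i:ℕ)+1-(j:ℕ)) else 0)
        + (if (i:ℕ) ≤ (j:ℕ)+1 then wcoef α ((j:ℕ)+1-(i:ℕ)) else 0)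
    linarith

lemma quad_nonpos (α : ℝ) (hα1 : 1 < α) (hα2 : α < 2) (M : ℕ) (x : Fin M → ℝ) :
    x ⬝ᵥ (Gmat α M *ᵥ x) ≤ 0 := by
  set G := Gmat α M with hG
  have hQ : x ⬝ᵥ (G *ᵥ x) = ∑ i, ∑ j, G i j * (x i * x j) := by
    refine Finset.sum_congr rfl fun i _ => ?_
    show x i * (∑ j, G i j * x j) = _
    rw [Finset.mul_sum]
    exact Finset.sum_congr rfl fun j _ => by ring
  have hswap : ∑ i, ∑ j, G i j * (x i * x j) = ∑ i, ∑ j, G j i * (x i * x j) := by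
    rw [Finset.sum_comm]
    exact Finset.sum_congr rfl fun i _ => Finset.sum_congr rfl fun j _ => by ring
  have h2 : 2 * (x ⬝ᵥ (G *ᵥ x)) = ∑ i, ∑ j, (G i j + G j i) * (x i * x j) := by
    have e : ∑ i, ∑ j, (G i j + G j i) * (x i * x j)
        = (∑ i, ∑ j, G i j * (x i * x j)) + ∑ i, ∑ j, G j i * (x i * x j) := by
      rw [← Finset.sum_add_distrib]
      refine Finset.sum_congr rfl fun i _ => ?_
      rw [← Finset.sum_add_distrib]
      exact Finset.sum_congr rfl fun j _ => by ring
    rw [e, ← hswap, ← hQ]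
    ring
  have h3 : ∑ i, ∑ j, (G i j + G j i) * (x i * x j)
      ≤ ∑ i, ∑ j, (G i j + G j i) * ((x i^2 + x j^2)/2) := by
    refine Finset.sum_le_sum fun i _ => Finset.sum_le_sum fun j _ => ?_
    by_cases hij : i = j
    · subst hij
      apply le_of_eq
      ring
    · have hn := sym_nonneg α hα1 hα2 i j hij
      have hx : x i * x j ≤ (x i^2 + x j^2)/2 := by nlinarith [sq_nonneg (x i - x j)]
      exact mul_le_mul_of_nonneg_left hx hn
  have h4 : ∑ i, ∑ j, (G i j + G j i) * ((x i^2 + x j^2)/2)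
      = ∑ i, ((∑ j, G i j) + (∑ j, G j i)) * x i^2 := by
    have e1 : ∑ i, ∑ j, (G i j + G j i) * ((x i^2 + x j^2)/2)
        = ∑ i, ∑ j, ((G i j + G j i) * (x i^2/2) + (G i j + G j i) * (x j^2/2)) := by
      refine Finset.sum_congr rfl fun i _ => Finset.sum_congr rfl fun j _ => by ring
    rw [e1]
    have e2 : ∑ i, ∑ j, ((G i j + G j i) * (x i^2/2) + (G i j + G j i) * (x j^2/2))
        = (∑ i, ∑ j, (G i j + G j i) * (x i^2/2))
          + ∑ i, ∑ j, (G i j + G j i) * (x j^2/2) := by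
      rw [← Finset.sum_add_distrib]
      exact Finset.sum_congr rfl fun i _ => Finset.sum_add_distrib
    rw [e2]
    have e3 : ∑ i, ∑ j, (G i j + G j i) * (x j^2/2)
        = ∑ i, ∑ j, (G j i + G i j) * (x i^2/2) := by
      rw [Finset.sum_comm]
    rw [e3]
    rw [← Finset.sum_add_distrib]
    refine Finset.sum_congr rfl fun i _ => ?_
    rw [← Finset.sum_add_distrib, add_mul, Finset.sum_mul, Finset.sum_mul,
      ← Finset.sum_add_distrib]
    exact Finset.sum_congr rfl fun j _ => by ring
  have h5 : ∑ i, ((∑ j, G i j) + (∑ j, G j i)) * x i^2 ≤ 0 := by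
    refine Finset.sum_nonpos fun i _ => ?_
    exact mul_nonpos_of_nonpos_of_nonneg (rowcol_nonpos α hα1 hα2 M i) (sq_nonneg _)
  linarith

/-- Proposition 2.2: the Toeplitz preconditioner `P = I_M − η d̄ G_α` is invertible for
every `α ∈ (1,2)`, every positive integer `M`, and all `η ≥ 0`, `d̄ ≥ 0`. -/
theorem toeplitz_preconditioner_invertible (α : ℝ) (hα : α ∈ Set.Ioo (1 : ℝ) 2)
    (M : ℕ) (hM : 0 < M) (η dbar : ℝ) (hη : 0 ≤ η) (hdbar : 0 ≤ dbar) :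
    IsUnit ((1 : Matrix (Fin M) (Fin M) ℝ) - (η * dbar) • Gmat α M) := by
  obtain ⟨hα1, hα2⟩ := hα
  have hc0 : 0 ≤ η * dbar := mul_nonneg hη hdbar
  by_contra hP
  rw [Matrix.isUnit_iff_isUnit_det, isUnit_iff_ne_zero, not_ne_iff] at hP
  obtain ⟨v, hv0, hv⟩ := (Matrix.exists_mulVec_eq_zero_iff).mpr hP
  have h1 : v ⬝ᵥ ((1 - (η * dbar) • Gmat α M) *ᵥ v) = 0 := by rw [hv, dotProduct_zero]
  rw [Matrix.sub_mulVec, Matrix.one_mulVec, Matrix.smul_mulVec, dotProduct_sub,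
    dotProduct_smul, smul_eq_mul] at h1
  have h2 := quad_nonpos α hα1 hα2 M v
  have h3 : v ⬝ᵥ v ≤ 0 := by nlinarith
  have h4 : (0:ℝ) ≤ v ⬝ᵥ v := Finset.sum_nonneg fun i _ => mul_self_nonneg _
  exact hv0 (dotProduct_self_eq_zero.mp (le_antisymm h3 h4))
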